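/- arXiv:1007.2678 — 5 statements merged into one kernel-verified Lean document; each statement's English description precedes it below -/
import Mathlib

section
/- Let G = (V1 ∪ V2, E) be a bipartite graph with |V1| = |V2| = t. G has a perfect matching if and only if the polynomial F(G) = ∏_{i=1}^t (Σ_{(v_i,u_j)∈E} x_i y_j) contains the multilinear monomial x_1...x_t y_1...y_t with nonzero coefficient in its sum-product expansion. -/
/-!
Expanding the product, `F(G)` is the sum over all maps `g` with `(v_i, u_{g i}) ∈ E` of the
monomial `∏ i, x_i y_{g i}`, each with coefficient `1`. That monomial is `x_1 ⋯ x_t y_1 ⋯ y_t`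
exactly when every `y_j` occurs once, i.e. when `g` is a bijection. Hence the coefficient counts
the perfect matchings, and no cancellation can occur.
-/

open MvPolynomial Finset

theorem Finsupp.sum_single_comp_eq_sum_single_iff {ι κ : Type*} [Fintype ι] [Fintype κ]
    (g : ι → κ) :
    ∑ i, Finsupp.single (g i) 1 = ∑ j, Finsupp.single j 1 ↔ Function.Bijective g := by
  classical
  have fiber (j : κ) : (∑ i, Finsupp.single (g i) 1 : κ →₀ ℕ) j = #{i | g i = j} := by
    simp [Finsupp.finsetSum_apply, Finsupp.single_apply, sum_boole]
  constructor
  · intro h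
    refine Function.bijective_iff_existsUnique _ |>.mpr fun j => ?_
    have hj : #{i | g i = j} = 1 := by
      rw [← fiber, h]
      simp [Finsupp.finsetSum_apply, Finsupp.single_apply]
    obtain ⟨i, hi⟩ := card_eq_one.mp hj
    exact ⟨i, by simpa using hi.ge (mem_singleton_self i),
      fun i' hi' => mem_singleton.mp (hi ▸ by simpa using hi')⟩
  · intro hg
    exact hg.sum_comp fun j => Finsupp.single j 1

theorem MvPolynomial.prod_X_inl_mul_X_inr {ι κ R : Type*} [Fintype ι] [CommSemiring R]
    (g : ι → κ) :
    ∏ i, (X (Sum.inl i) * X (Sum.inr (g i)) : MvPolynomial (ι ⊕ κ) R) =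
      monomial (∑ i, (Finsupp.single (Sum.inl i) 1 + Finsupp.single (Sum.inr (g i)) 1)) 1 := by
  rw [monomial_sum_one]
  exact prod_congr rfl fun i _ => by rw [X, X, monomial_mul, one_mul]

theorem Finsupp.sum_single_inl_add_inr_eq_sum_single_iff {ι κ : Type*} [Fintype ι] [Fintype κ]
    (g : ι → κ) :
    ∑ i, (Finsupp.single (Sum.inl i) 1 + Finsupp.single (Sum.inr (g i)) 1) =
        (∑ v : ι ⊕ κ, Finsupp.single v 1 : ι ⊕ κ →₀ ℕ) ↔ Function.Bijective g := by
  rw [Fintype.sum_sum_type, sum_add_distrib, add_right_inj,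
    ← Finsupp.sum_single_comp_eq_sum_single_iff g]
  simp only [← Finsupp.mapDomain_single, ← Finsupp.mapDomain_finsetSum]
  exact (Finsupp.mapDomain_injective Sum.inr_injective).eq_iff

theorem MvPolynomial.coeff_prod_sum_X_inl_mul_X_inr {ι κ R : Type*} [Fintype ι] [Fintype κ]
    [DecidableEq ι] [DecidableEq κ] [CommSemiring R] (E : ι → κ → Prop) [DecidableRel E] :
    coeff (∑ v : ι ⊕ κ, Finsupp.single v 1)
        (∏ i, ∑ j ∈ univ.filter (E i), (X (Sum.inl i) * X (Sum.inr j) : MvPolynomial (ι ⊕ κ) R)) =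
      #{σ : ι ≃ κ | ∀ i, E i (σ i)} := by
  simp only [prod_univ_sum, prod_X_inl_mul_X_inr, coeff_sum, coeff_monomial,
    Finsupp.sum_single_inl_add_inr_eq_sum_single_iff, sum_boole]
  congr 1
  refine card_bij (fun g hg => Equiv.ofBijective g (mem_filter.mp hg).2) ?_ ?_ ?_
  · intro g hg
    have hE i := (mem_filter.mp (Fintype.mem_piFinset.mp (mem_filter.mp hg).1 i)).2
    exact mem_filter.mpr ⟨mem_univ _, hE⟩
  · intro g _ g' _ h
    exact congrArg DFunLike.coe h
  · intro σ hσ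
    have hE : ∀ i, σ i ∈ univ.filter (E i) := fun i => by simpa using (mem_filter.mp hσ).2 i
    exact ⟨σ, mem_filter.mpr ⟨Fintype.mem_piFinset.mpr hE, σ.bijective⟩, Equiv.ext fun _ => rfl⟩

/-- A bipartite graph `G` with parts of size `t` has a perfect matching iff the
polynomial `F(G) = ∏ i, (∑_{(v_i,u_j) ∈ E} x_i y_j)` contains the multilinear
monomial `x_1 ⋯ x_t y_1 ⋯ y_t` with nonzero coefficient. -/
theorem perfect_matching_iff_coeff_ne_zero (t : ℕ) (E : Fin t → Fin t → Prop) [DecidableRel E] :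
    (∃ σ : Equiv.Perm (Fin t), ∀ i, E i (σ i)) ↔
      MvPolynomial.coeff (∑ v : Fin t ⊕ Fin t, Finsupp.single v 1)
        (∏ i : Fin t, ∑ j ∈ Finset.univ.filter (fun j => E i j),
          (X (Sum.inl i) * X (Sum.inr j) : MvPolynomial (Fin t ⊕ Fin t) ℤ)) ≠ 0 := by
  rw [coeff_prod_sum_X_inl_mul_X_inr, Nat.cast_ne_zero, card_ne_zero]
  simp [filter_nonempty_iff]
end

section
/- Let F be a polynomial in n variables over ℤ that is a product of m linear forms with nonnegative coefficients (a Π_m Σ polynomial), with m ≤ n, and let H = x_1 + ... + x_n. Then the coefficient of the monomial x_1 x_2 ... x_n in F * H^{n-m} equals S(F) * (n-m)!, where S(F) is the sum of the coefficients of all multilinear monomials of degree m in F. -/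
/-!
Only monomials `x^d` of `F` with `d ≤ (1, …, 1)` can contribute to `x_1 ⋯ x_n`, and each is
completed by the multilinear monomial `x^(1 - d)`, of degree `n - m` since `F` is homogeneous.
Its coefficient in `(x_1 + ⋯ + x_n)^(n - m)` is the multinomial coefficient
`(n - m)! / ∏ 1! = (n - m)!`.
-/

open MvPolynomial

theorem Finsupp.multinomial_eq_factorial_degree_of_le_one {α : Type*} {f : α →₀ ℕ}
    (hf : ∀ a, f a ≤ 1) : f.multinomial = f.degree.factorial := by
  have hprod : ∏ a ∈ f.support, (f a).factorial = 1 :=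
    Finset.prod_eq_one fun a _ => Nat.factorial_eq_one.mpr (hf a)
  rw [Finsupp.multinomial_eq, Finsupp.degree_apply, ← Nat.multinomial_spec, hprod, one_mul]

namespace MvPolynomial

variable {R σ : Type*} [CommSemiring R]

theorem coeff_sum_X_pow_of_le_one [Fintype σ] {d : σ →₀ ℕ} {k : ℕ} (hd : ∀ i, d i ≤ 1)
    (hk : d.degree = k) :
    coeff d ((∑ i, X i : MvPolynomial σ R) ^ k) = (k.factorial : R) := by
  rw [coeff_sum_X_pow_of_fintype, if_pos (show d.sum (fun _ m ↦ m) = k from hk),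
    Finsupp.multinomial_eq_factorial_degree_of_le_one hd, hk]

theorem coeff_mul_eq_sum_support_le (F G : MvPolynomial σ R) (u : σ →₀ ℕ) :
    coeff u (F * G) = ∑ d ∈ F.support with d ≤ u, coeff d F * coeff (u - d) G := by
  conv_lhs => rw [mul_comm, F.as_sum]
  simp only [Finset.mul_sum, coeff_sum, coeff_mul_monomial', Finset.sum_filter, mul_comm]

theorem IsHomogeneous.coeff_mul_sum_X_pow_of_le_one [Fintype σ] {F : MvPolynomial σ R} {m : ℕ}
    (hF : F.IsHomogeneous m) {u : σ →₀ ℕ} (hu : ∀ i, u i ≤ 1) :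
    coeff u (F * (∑ i, X i) ^ (u.degree - m))
      = (∑ d ∈ F.support with d ≤ u, coeff d F) * ((u.degree - m).factorial : R) := by
  rw [coeff_mul_eq_sum_support_le, Finset.sum_mul]
  refine Finset.sum_congr rfl fun d hd => congrArg _ ?_
  obtain ⟨hdF, hdu⟩ := Finset.mem_filter.mp hd
  have hdm : d.degree = m := of_not_not fun h => mem_support_iff.mp hdF (hF.coeff_eq_zero h)
  refine coeff_sum_X_pow_of_le_one (fun i => tsub_le_self.trans (hu i)) ?_
  rw [← hdm]
  exact eq_tsub_of_add_eq (by rw [← map_add, tsub_add_cancel_of_le hdu])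

end MvPolynomial

theorem coeff_mul_pow_H_eq_S_mul_factorial_general (n m : ℕ)
    (a : Fin m → Fin n → ℕ) :
    let F : MvPolynomial (Fin n) ℤ := ∏ i : Fin m, ∑ j : Fin n, C (a i j : ℤ) * X j
    let H : MvPolynomial (Fin n) ℤ := ∑ j : Fin n, X j
    MvPolynomial.coeff (∑ j : Fin n, Finsupp.single j 1) (F * H ^ (n - m))
      = (∑ d ∈ F.support.filter (fun d => ∀ j, d j ≤ 1), MvPolynomial.coeff d F)
          * ((n - m).factorial : ℤ) := by
  intro F H
  have hF : F.IsHomogeneous m := by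
    simpa [F] using IsHomogeneous.prod Finset.univ _ (fun _ => 1) fun i _ =>
      IsHomogeneous.sum Finset.univ _ 1 fun j _ => isHomogeneous_C_mul_X (a i j : ℤ) j
  have hones : ∀ j, (∑ i : Fin n, Finsupp.single i 1) j = 1 := by simp
  have hdeg : (∑ i : Fin n, Finsupp.single i 1).degree = n := by simp
  have key := hF.coeff_mul_sum_X_pow_of_le_one (fun j => (hones j).le)
  rw [hdeg] at key
  rw [key]
  congr 2
  refine Finset.filter_congr fun d _ => ?_
  simp [Finsupp.le_def, hones]

/-- Let `F = ∏_{i<m} (∑_j a_{ij} x_j)` be a product of `m` linear forms with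
nonnegative coefficients in `n` variables, `m ≤ n`, and `H = x_1 + ⋯ + x_n`.
Then the coefficient of `x_1 ⋯ x_n` in `F * H^(n-m)` equals `S(F) * (n-m)!`,
where `S(F)` is the sum of the coefficients of all multilinear monomials of `F`. -/
theorem coeff_mul_pow_H_eq_S_mul_factorial (n m : ℕ) (hmn : m ≤ n)
    (a : Fin m → Fin n → ℕ) :
    let F : MvPolynomial (Fin n) ℤ := ∏ i : Fin m, ∑ j : Fin n, C (a i j : ℤ) * X j
    let H : MvPolynomial (Fin n) ℤ := ∑ j : Fin n, X j
    MvPolynomial.coeff (∑ j : Fin n, Finsupp.single j 1) (F * H ^ (n - m))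
      = (∑ d ∈ F.support.filter (fun d => ∀ j, d j ≤ 1), MvPolynomial.coeff d F)
          * ((n - m).factorial : ℤ) :=
  coeff_mul_pow_H_eq_S_mul_factorial_general n m a
end

section
/- Let G = (V, E) be an undirected graph on n vertices, and for c ≥ 1 define polynomials p_{1,i} = x_i^c and p_{k+1,i} = x_i^c * (Σ_{(v_i,v_j)∈E} p_{k,j}), and p(G,k) = Σ_{i=1}^n p_{k,i}. Then G contains a walk v_{i_1}, v_{i_2}, ..., v_{i_k} of k vertices (consecutive vertices adjacent) with all vertices distinct if and only if the sum-product expansion of p(G,k) contains the monomial x_{i_1}^c ⋯ x_{i_k}^c on k distinct variables. -/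
open MvPolynomial

/-- `pwalk n c E k i` is the polynomial `p_{k+1,i}` of the paper:
`p_{1,i} = x_i ^ c` and `p_{k+1,i} = x_i ^ c * ∑_{(v_i,v_j) ∈ E} p_{k,j}`. -/
noncomputable def pwalk (n c : ℕ) (E : Fin n → Fin n → Prop) [DecidableRel E] :
    ℕ → Fin n → MvPolynomial (Fin n) ℤ
  | 0, i => X i ^ c
  | k + 1, i => X i ^ c * ∑ j ∈ Finset.univ.filter (fun j => E i j), pwalk n c E k j

/-!
Unfolding the recursion, `∑ i, p_{k,i}` is the sum over all walks `w` on `k` vertices of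
`∏ j, x_{w j} ^ c`, each with coefficient `1`; so the coefficient of a monomial counts walks and
nothing cancels. Since `c ≠ 0`, the exponent vector of a walk's monomial determines the multiset
of vertices it visits, and this multiset is `S` with multiplicity one exactly when the walk is
injective with vertices in `S` (using `|S| = k`).
-/

open Finset

section Walks

variable {α : Type*} (E : α → α → Prop)

def IsWalk {m : ℕ} (w : Fin (m + 1) → α) : Prop :=
  ∀ j : Fin m, E (w j.castSucc) (w j.succ)

instance [DecidableRel E] {m : ℕ} : DecidablePred (IsWalk E (m := m)) :=
  fun _ => inferInstanceAs (Decidable (∀ _, _))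

variable {E}

theorem isWalk_cons {m : ℕ} (a : α) (w : Fin (m + 1) → α) :
    IsWalk E (Fin.cons a w : Fin (m + 2) → α) ↔ E a (w 0) ∧ IsWalk E w := by
  simp [IsWalk, Fin.forall_fin_succ]

theorem isWalk_iff_forall_nat {m : ℕ} (w : Fin (m + 1) → α) :
    IsWalk E w ↔
      ∀ (j : ℕ) (hj : j + 1 < m + 1), E (w ⟨j, Nat.lt_of_succ_lt hj⟩) (w ⟨j + 1, hj⟩) :=
  ⟨fun h j hj => h ⟨j, by omega⟩, fun h j => h j (by omega)⟩

end Walks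

theorem sum_filter_head_eq_sum_cons {α M : Type*} [Fintype α] [DecidableEq α] [AddCommMonoid M]
    {m : ℕ} (P : (Fin (m + 1) → α) → Prop) [DecidablePred P] (a : α)
    (f : (Fin (m + 1) → α) → M) :
    ∑ w with P w ∧ w 0 = a, f w =
      ∑ w : Fin m → α with P (Fin.cons a w : Fin (m + 1) → α), f (Fin.cons a w) := by
  refine (sum_nbij' (fun w => (Fin.cons a w : Fin (m + 1) → α)) Fin.tail ?_ ?_ ?_ ?_ ?_).symm
  · simp
  · intro w hw
    obtain ⟨hw, rfl⟩ : P w ∧ w 0 = a := by simpa using hw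
    simpa
  · simp
  · intro w hw
    obtain ⟨-, rfl⟩ : P w ∧ w 0 = a := by simpa using hw
    exact Fin.cons_self_tail w
  · simp

section Pwalk

variable {n : ℕ} (c : ℕ) {E : Fin n → Fin n → Prop} [DecidableRel E]

theorem pwalk_eq_sum_walks (k : ℕ) (i : Fin n) :
    pwalk n c E k i =
      ∑ w : Fin (k + 1) → Fin n with IsWalk E w ∧ w 0 = i, ∏ j, X (w j) ^ c := by
  induction k generalizing i with
  | zero =>
    rw [pwalk, sum_filter_head_eq_sum_cons]
    simp [IsWalk]
  | succ k ih =>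
    rw [pwalk, sum_filter_head_eq_sum_cons]
    simp only [isWalk_cons, Fin.prod_univ_succ (n := k + 1), Fin.cons_zero, Fin.cons_succ,
      ← mul_sum, ih]
    congr 1
    simp only [← filter_filter, sum_fiberwise_eq_sum_filter]
    simp [filter_filter, and_comm]

theorem sum_pwalk_eq_sum_walks (k : ℕ) :
    ∑ i, pwalk n c E k i = ∑ w : Fin (k + 1) → Fin n with IsWalk E w, ∏ j, X (w j) ^ c := by
  simp only [pwalk_eq_sum_walks, ← filter_filter, sum_fiberwise]

end Pwalk

theorem coeff_sum_prod_X_pow {R σ ι κ : Type*} [CommSemiring R] [Fintype κ] [DecidableEq σ]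
    (s : Finset ι) (w : ι → κ → σ) (c : ℕ) (d : σ →₀ ℕ) :
    coeff d (∑ x ∈ s, ∏ j, (X (w x j) : MvPolynomial σ R) ^ c) =
      #{x ∈ s | ∑ j, Finsupp.single (w x j) c = d} := by
  simp only [X_pow_eq_monomial, ← monomial_sum_one, coeff_sum, coeff_monomial, sum_boole]

theorem toMultiset_sum_single_comp {ι α : Type*} [Fintype ι] (w : ι → α) (c : ℕ) :
    Finsupp.toMultiset (∑ j, Finsupp.single (w j) c) = c • univ.val.map w := by
  rw [← Multiset.map_nsmul, ← Finsupp.toMultiset_sum_single, Finsupp.toMultiset_map,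
    Finsupp.mapDomain_finsetSum]
  simp only [Finsupp.mapDomain_single]

theorem sum_single_eq_sum_single_iff {ι α : Type*} [Fintype ι] {c : ℕ} (hc : c ≠ 0)
    (w : ι → α) {S : Finset α} (hS : #S = Fintype.card ι) :
    ∑ j, Finsupp.single (w j) c = ∑ a ∈ S, Finsupp.single a c ↔
      Function.Injective w ∧ ∀ j, w j ∈ S := by
  constructor
  · intro h
    have hval : univ.val.map w = S.val := by
      apply nsmul_right_injective hc
      simpa only [toMultiset_sum_single_comp, Finsupp.toMultiset_sum_single] using
        congrArg Finsupp.toMultiset h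
    refine ⟨fun x y hxy => ?_, fun j => ?_⟩
    · exact (Multiset.nodup_map_iff_inj_on univ.nodup).1 (hval ▸ S.nodup)
        x (mem_univ x) y (mem_univ y) hxy
    · rw [← Finset.mem_val, ← hval]
      exact Multiset.mem_map_of_mem w (mem_univ j)
  · rintro ⟨hinj, hmem⟩
    have himage : univ.map ⟨w, hinj⟩ = S :=
      eq_of_subset_of_card_le (by simpa [subset_iff] using hmem) (by simp [hS])
    rw [← himage, sum_map]
    rfl

theorem kpath_iff_monomial_general (n c k : ℕ) (hc : 1 ≤ c) (hk : 1 ≤ k)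
    (E : Fin n → Fin n → Prop) [DecidableRel E]
    (S : Finset (Fin n)) (hS : S.card = k) :
    (∃ v : Fin k → Fin n, Function.Injective v ∧ (∀ j, v j ∈ S) ∧
        ∀ (j : ℕ) (hj : j + 1 < k),
          E (v ⟨j, Nat.lt_of_succ_lt hj⟩) (v ⟨j + 1, hj⟩)) ↔
      MvPolynomial.coeff (∑ a ∈ S, Finsupp.single a c)
        (∑ i : Fin n, pwalk n c E (k - 1) i) ≠ 0 := by
  obtain ⟨m, rfl⟩ : ∃ m, k = m + 1 := ⟨k - 1, by omega⟩
  have hc' : c ≠ 0 := by omega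
  have hS' : #S = Fintype.card (Fin (m + 1)) := by rw [hS, Fintype.card_fin]
  rw [Nat.add_sub_cancel, sum_pwalk_eq_sum_walks, coeff_sum_prod_X_pow, Nat.cast_ne_zero,
    card_ne_zero, filter_nonempty_iff]
  simp only [mem_filter, mem_univ, true_and, sum_single_eq_sum_single_iff hc' _ hS',
    ← isWalk_iff_forall_nat]
  exact exists_congr fun v => by tauto

/-- `G` contains a walk on `k` pairwise distinct vertices with vertex set `S`
(consecutive vertices adjacent) iff the sum-product expansion of
`p(G,k) = ∑ i, p_{k,i}` contains the monomial `∏_{a ∈ S} x_a ^ c`. -/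
theorem kpath_iff_monomial (n c k : ℕ) (hc : 1 ≤ c) (hk : 1 ≤ k)
    (E : Fin n → Fin n → Prop) [DecidableRel E] (hsym : ∀ i j, E i j → E j i)
    (S : Finset (Fin n)) (hS : S.card = k) :
    (∃ v : Fin k → Fin n, Function.Injective v ∧ (∀ j, v j ∈ S) ∧
        ∀ (j : ℕ) (hj : j + 1 < k),
          E (v ⟨j, Nat.lt_of_succ_lt hj⟩) (v ⟨j + 1, hj⟩)) ↔
      MvPolynomial.coeff (∑ a ∈ S, Finsupp.single a c)
        (∑ i : Fin n, pwalk n c E (k - 1) i) ≠ 0 :=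
  kpath_iff_monomial_general n c k hc hk E S hS
end

section
/- Let M_1, ..., M_k be pairwise disjoint finite sets each of size at most λ, sorted so |M_1| ≥ |M_2| ≥ ... ≥ |M_k|. Suppose π_1, ..., π_ℓ are sets with ℓ ≥ ⌈k/λ⌉ and |π_i| ≥ |M_{λ(i-1)+1}| for each i ≤ ⌈k/λ⌉ (interpreting |M_j| = 0 for j > k). Then Σ_{i=1}^ℓ |π_i| ≥ (Σ_{j=1}^k |M_j|) / λ. -/
/-! The sum over `M` splits into `⌈k/lam⌉` blocks of `lam` consecutive sets (padding with empty
sets past `k`). Since the sizes are nonincreasing, block `i` weighs at most `lam` times the size of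
its first set, which is bounded by `|π_i|`. -/

open Finset

section ExtendByZero

variable {α : Type*} [AddCommMonoid α] {k : ℕ}

def extendByZero (f : Fin k → α) (j : ℕ) : α :=
  if h : j < k then f ⟨j, h⟩ else 0

lemma extendByZero_of_lt (f : Fin k → α) {j : ℕ} (h : j < k) :
    extendByZero f j = f ⟨j, h⟩ :=
  dif_pos h

lemma sum_range_extendByZero_of_le (f : Fin k → α) {n : ℕ} (hkn : k ≤ n) :
    ∑ j ∈ range n, extendByZero f j = ∑ j, f j := by
  have htail : ∑ r ∈ range (n - k), extendByZero f (k + r) = 0 :=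
    sum_eq_zero fun r _ ↦ dif_neg (Nat.not_lt.2 (Nat.le_add_right k r))
  rw [← Nat.add_sub_cancel' hkn, sum_range_add, htail, add_zero, sum_range]
  exact sum_congr rfl fun j _ ↦ extendByZero_of_lt f j.isLt

lemma antitone_extendByZero [PartialOrder α] [CanonicallyOrderedAdd α] {f : Fin k → α}
    (hf : Antitone f) : Antitone (extendByZero f) := by
  intro a b hab
  unfold extendByZero
  split_ifs with hb ha ha
  · exact hf (Fin.mk_le_mk.2 hab)
  · omega
  · exact zero_le
  · exact le_rfl

end ExtendByZero

lemma sum_range_mul_le_nsmul_sum_of_antitone {α : Type*} [AddCommMonoid α] [PartialOrder α]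
    [IsOrderedAddMonoid α] {f : ℕ → α} (hf : Antitone f) (m n : ℕ) :
    ∑ j ∈ range (m * n), f j ≤ m • ∑ i ∈ range n, f (m * i) := by
  induction n with
  | zero => simp
  | succ n ih =>
    have hblock : ∑ r ∈ range m, f (m * n + r) ≤ m • f (m * n) := by
      simpa using sum_le_card_nsmul (range m) _ _ fun r _ ↦ hf (Nat.le_add_right (m * n) r)
    rw [Nat.mul_succ, sum_range_add, sum_range_succ, smul_add]
    exact add_le_add ih hblock

theorem greedy_counting_inequality_general {α : Type*} (lam k ℓ : ℕ)
    (hlam : 1 ≤ lam)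
    (M : Fin k → Finset α)
    (hsorted : ∀ j j' : Fin k, j ≤ j' → (M j').card ≤ (M j).card)
    (π : Fin ℓ → Finset α)
    (hℓ : (k + lam - 1) / lam ≤ ℓ)
    (hπ : ∀ i : Fin ℓ, (i : ℕ) < (k + lam - 1) / lam →
      (if h : lam * (i : ℕ) < k then (M ⟨lam * (i : ℕ), h⟩).card else 0) ≤ (π i).card) :
    ∑ j, (M j).card ≤ lam * ∑ i, (π i).card := by
  set q := (k + lam - 1) / lam
  -- `q` is `k ⌈/⌉ lam` by definition
  have hk : k ≤ lam * q := (ceilDiv_le_iff_le_mul hlam).1 le_rfl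
  have hfirst : ∀ i ∈ range q,
      extendByZero (fun j ↦ (M j).card) (lam * i) ≤ extendByZero (fun i ↦ (π i).card) i := by
    intro i hi
    have hiℓ : i < ℓ := (mem_range.1 hi).trans_le hℓ
    rw [extendByZero_of_lt _ hiℓ]
    exact hπ ⟨i, hiℓ⟩ (mem_range.1 hi)
  calc ∑ j, (M j).card
      = ∑ j ∈ range (lam * q), extendByZero (fun j ↦ (M j).card) j :=
        (sum_range_extendByZero_of_le _ hk).symm
    _ ≤ lam * ∑ i ∈ range q, extendByZero (fun j ↦ (M j).card) (lam * i) :=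
        sum_range_mul_le_nsmul_sum_of_antitone (antitone_extendByZero hsorted) lam q
    _ ≤ lam * ∑ i ∈ range ℓ, extendByZero (fun i ↦ (π i).card) i := by
        exact Nat.mul_le_mul_left lam
          ((sum_le_sum hfirst).trans (sum_le_sum_of_subset (range_subset_range.2 hℓ)))
    _ = lam * ∑ i, (π i).card := by rw [sum_range_extendByZero_of_le _ le_rfl]

/-- Core counting inequality for the greedy λ-approximation: if `M_1 ⊇ … ⊇ M_k`
(in size) are pairwise disjoint finite sets of size at most `lam`, sorted
nonincreasingly, `ℓ ≥ ⌈k/lam⌉`, and `|π_i| ≥ |M_{lam·(i-1)+1}|` for each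
`i ≤ ⌈k/lam⌉` (with `|M_j| = 0` for `j > k`), then
`∑_j |M_j| ≤ lam * ∑_i |π_i|`, i.e. `∑_i |π_i| ≥ (∑_j |M_j|)/lam`. -/
theorem greedy_counting_inequality {α : Type*} [DecidableEq α] (lam k ℓ : ℕ)
    (hlam : 1 ≤ lam)
    (M : Fin k → Finset α)
    (hMdisj : ∀ j j', j ≠ j' → Disjoint (M j) (M j'))
    (hMsize : ∀ j, (M j).card ≤ lam)
    (hsorted : ∀ j j' : Fin k, j ≤ j' → (M j').card ≤ (M j).card)
    (π : Fin ℓ → Finset α)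
    (hℓ : (k + lam - 1) / lam ≤ ℓ)
    (hπ : ∀ i : Fin ℓ, (i : ℕ) < (k + lam - 1) / lam →
      (if h : lam * (i : ℕ) < k then (M ⟨lam * (i : ℕ), h⟩).card else 0) ≤ (π i).card) :
    ∑ j, (M j).card ≤ lam * ∑ i, (π i).card :=
  greedy_counting_inequality_general lam k ℓ hlam M hsorted π hℓ hπ
end

section
/- Let G = (V, E) be an undirected graph on n vertices. For each edge (v_i,v_j) introduce a variable x_{ij}, and for each vertex v_i define the term T(v_i) as the product of x_{ij} over edges incident to v_i, padded with fresh variables y_{i1},...,y_{i,n-1-d(v_i)} so that every T(v_i) has degree exactly n-1. Then for any subset S ⊆ V, the product ∏_{v ∈ S} T(v) is a squarefree (multilinear) monomial if and only if S is an independent set in G. -/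
/-!
At a variable `v`, the exponent of `∏_{i ∈ S} T(v_i)` is the number of `i ∈ S` with
`v ∈ T(v_i)`, so the product is squarefree iff the terms `T(v_i)`, `i ∈ S`, are pairwise
disjoint. A padding variable `y_{ik}` lies only in `T(v_i)`, and an edge variable lies in
`T(v_i)` iff the edge is incident to `v_i`; hence `T(v_i)` and `T(v_j)` meet iff `v_i` and
`v_j` are adjacent.
-/

open Finset

theorem Finset.sum_sum_single_one_apply {ι α : Type*} [DecidableEq α] (S : Finset ι)
    (T : ι → Finset α) (v : α) :
    (∑ i ∈ S, ∑ x ∈ T i, Finsupp.single x 1) v = #{i ∈ S | v ∈ T i} := by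
  simp only [Finsupp.finsetSum_apply, Finsupp.single_apply, sum_ite_eq', card_filter]

theorem Finset.forall_card_filter_mem_le_one_iff {ι α : Type*} [DecidableEq α] (S : Finset ι)
    (T : ι → Finset α) :
    (∀ v, #{i ∈ S | v ∈ T i} ≤ 1) ↔ (S : Set ι).PairwiseDisjoint T := by
  simp only [card_le_one, mem_filter, Set.PairwiseDisjoint, Set.Pairwise, mem_coe,
    Function.onFun, disjoint_left]
  constructor
  · intro h i hi j hj hij v hvi hvj
    exact hij (h v i ⟨hi, hvi⟩ j ⟨hj, hvj⟩)
  · intro h v i ⟨hi, hvi⟩ j ⟨hj, hvj⟩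
    by_contra hij
    exact h hi hj hij hvi hvj

namespace SimpleGraph

variable {V : Type*} [Fintype V] [DecidableEq V] (G : SimpleGraph V) [DecidableRel G.Adj]

/-- `Sum.inl s(i, j)` encodes the edge variable `x_{ij}`, `Sum.inr (i, k)` the padding
variable `y_{ik}`. -/
def incidenceTerm (pad : V → ℕ) (i : V) : Finset (Sym2 V ⊕ (V × ℕ)) :=
  ((G.neighborFinset i).image fun j => Sum.inl s(i, j)) ∪
    ((range (pad i)).image fun k => Sum.inr (i, k))

variable {G}

theorem inl_mem_incidenceTerm {pad : V → ℕ} {i : V} {e : Sym2 V} :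
    Sum.inl e ∈ G.incidenceTerm pad i ↔ e ∈ G.incidenceSet i := by
  induction e using Sym2.ind with
  | h a b =>
    simp only [incidenceTerm, mem_union, mem_image, mem_neighborFinset, Sym2.eq_iff,
      reduceCtorEq, and_false, exists_false, or_false, Sum.inl.injEq, mk'_mem_incidenceSet_iff]
    grind [G.adj_symm]

theorem inr_mem_incidenceTerm {pad : V → ℕ} {i : V} {p : V × ℕ} :
    Sum.inr p ∈ G.incidenceTerm pad i ↔ p.1 = i ∧ p.2 < pad i := by
  simp only [incidenceTerm, mem_union, mem_image, mem_range, reduceCtorEq, and_false,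
    exists_false, false_or, Sum.inr.injEq]
  grind

theorem disjoint_incidenceTerm_iff {pad : V → ℕ} {i j : V} (hij : i ≠ j) :
    Disjoint (G.incidenceTerm pad i) (G.incidenceTerm pad j) ↔ ¬G.Adj i j := by
  rw [Finset.disjoint_left]
  constructor
  · intro h hadj
    exact h (inl_mem_incidenceTerm.2 (G.mk'_mem_incidenceSet_left_iff.2 hadj))
      (inl_mem_incidenceTerm.2 (G.mk'_mem_incidenceSet_right_iff.2 hadj))
  · rintro hnadj (e | p) hi hj
    · exact hnadj (G.adj_of_mem_incidenceSet hij (inl_mem_incidenceTerm.1 hi)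
        (inl_mem_incidenceTerm.1 hj))
    · exact hij ((inr_mem_incidenceTerm.1 hi).1.symm.trans (inr_mem_incidenceTerm.1 hj).1)

theorem pairwiseDisjoint_incidenceTerm_iff {pad : V → ℕ} {S : Set V} :
    S.PairwiseDisjoint (G.incidenceTerm pad) ↔ G.IsIndepSet S :=
  ⟨fun h _ hi _ hj hij => (disjoint_incidenceTerm_iff hij).1 (h hi hj hij),
    fun h _ hi _ hj hij => (disjoint_incidenceTerm_iff hij).2 (h hi hj hij)⟩

end SimpleGraph

/-- In the reduction from maximum independent set: each vertex `i` gets the term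
`T(v_i)` consisting of the edge variables `x_{ij}` of edges incident to `i`, padded
with fresh variables `y_{i,0},…,y_{i,n-2-d(i)}` to degree exactly `n-1`.  For any
vertex set `S`, the product `∏_{v ∈ S} T(v)` is a squarefree (multilinear) monomial
iff `S` is an independent set of `G`. -/
theorem squarefree_product_iff_independent (n : ℕ) (G : SimpleGraph (Fin n))
    [DecidableRel G.Adj] (S : Finset (Fin n)) :
    let T : Fin n → Finset (Sym2 (Fin n) ⊕ (Fin n × ℕ)) := fun i =>
      ((G.neighborFinset i).image fun j => Sum.inl s(i, j)) ∪
        ((Finset.range (n - 1 - G.degree i)).image fun j => Sum.inr (i, j))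
    (∀ v, (∑ i ∈ S, ∑ x ∈ T i, Finsupp.single x 1) v ≤ 1) ↔
      ∀ i ∈ S, ∀ j ∈ S, i ≠ j → ¬ G.Adj i j := by
  intro T
  have hT : T = G.incidenceTerm fun i => n - 1 - G.degree i := rfl
  simp only [sum_sum_single_one_apply, forall_card_filter_mem_le_one_iff, hT,
    SimpleGraph.pairwiseDisjoint_incidenceTerm_iff]
  rfl
end
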